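/- Let G be a group, n a natural number, and 𝒞 a cofamily of subgroups of G. Then C(𝒞, n) is a cofamily of subgroups of G × Σₙ: it is closed under conjugation, and if Δ ∈ C(𝒞, n) and Δ ≤ Δ' then Δ' ∈ C(𝒞, n). -/

import Mathlib

variable {G : Type*} [Group G] {n : ℕ}

/-- The stabilizer subgroup `Δᵢ = {δ ∈ Δ : p(δ) i = i}` of a subgroup
`Δ ≤ G × Σₙ`. -/
def stab (Δ : Subgroup (G × Equiv.Perm (Fin n))) (i : Fin n) :
    Subgroup (G × Equiv.Perm (Fin n)) where
  carrier := {x | x ∈ Δ ∧ x.2 i = i}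
  one_mem' := ⟨Δ.one_mem, rfl⟩
  mul_mem' := by
    rintro a b ⟨haΔ, ha⟩ ⟨hbΔ, hb⟩
    exact ⟨Δ.mul_mem haΔ hbΔ, by simp [Equiv.Perm.mul_apply, hb, ha]⟩
  inv_mem' := by
    rintro a ⟨haΔ, ha⟩
    exact ⟨Δ.inv_mem haΔ, by simp [Equiv.symm_apply_eq, ha]⟩

/-- The collection `C(𝒞, n)` of subgroups `Δ ≤ G × Σₙ` such that
`π(Δᵢ) ∈ 𝒞` for every `i : Fin n`. -/
def Cfam (𝒞 : Set (Subgroup G)) (n : ℕ) : Set (Subgroup (G × Equiv.Perm (Fin n))) :=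
  {Δ | ∀ i : Fin n, (stab Δ i).map (MonoidHom.fst G (Equiv.Perm (Fin n))) ∈ 𝒞}

theorem Cfam_isCofamily (𝒞 : Set (Subgroup G))
    (hconj : ∀ H ∈ 𝒞, ∀ g : G, H.map (MulAut.conj g).toMonoidHom ∈ 𝒞)
    (hup : ∀ H ∈ 𝒞, ∀ H' : Subgroup G, H ≤ H' → H' ∈ 𝒞) :
    (∀ Δ ∈ Cfam 𝒞 n, ∀ γ : G × Equiv.Perm (Fin n),
        Δ.map (MulAut.conj γ).toMonoidHom ∈ Cfam 𝒞 n) ∧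
      (∀ Δ ∈ Cfam 𝒞 n, ∀ Δ' : Subgroup (G × Equiv.Perm (Fin n)),
        Δ ≤ Δ' → Δ' ∈ Cfam 𝒞 n) := by
  have memstab : ∀ (Δ : Subgroup (G × Equiv.Perm (Fin n))) (i : Fin n)
      (x : G × Equiv.Perm (Fin n)), x ∈ stab Δ i ↔ x ∈ Δ ∧ x.2 i = i := by
    intro Δ i x; rfl
  constructor
  · intro Δ hΔ γ i
    have key : (stab (Δ.map (MulAut.conj γ).toMonoidHom) i).map
          (MonoidHom.fst G (Equiv.Perm (Fin n)))
        = ((stab Δ (γ.2⁻¹ i)).map (MonoidHom.fst G (Equiv.Perm (Fin n)))).map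
          (MulAut.conj γ.1).toMonoidHom := by
      ext x
      simp only [Subgroup.mem_map, memstab]
      constructor
      · rintro ⟨y, ⟨⟨δ, hδ, rfl⟩, hy2⟩, rfl⟩
        refine ⟨δ.1, ⟨δ, ⟨hδ, ?_⟩, rfl⟩, rfl⟩
        have : γ.2 (δ.2 (γ.2⁻¹ i)) = i := hy2
        simpa using congrArg (γ.2⁻¹ : Equiv.Perm (Fin n)) this
      · rintro ⟨z, ⟨δ, ⟨hδ, hδ2⟩, rfl⟩, rfl⟩
        refine ⟨γ * δ * γ⁻¹, ⟨⟨δ, hδ, rfl⟩, ?_⟩, rfl⟩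
        show γ.2 (δ.2 (γ.2⁻¹ i)) = i
        rw [hδ2]; simp
    rw [key]
    exact hconj _ (hΔ _) _
  · intro Δ hΔ Δ' hle i
    refine hup _ (hΔ i) _ (Subgroup.map_mono ?_)
    intro x hx
    rw [memstab] at hx ⊢
    exact ⟨hle hx.1, hx.2⟩
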